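/- arXiv:1608.01864 — 5 statements merged into one kernel-verified Lean document; each statement's English description precedes it below -/
import Mathlib

section
/- Let h¹, h² be positive continuously differentiable real functions of the single variable y₁, and let u = (u₁,u₂) be a continuously differentiable vector field on an open subset of ℝ². Then at every point y = (y₁,y₂) one has div_{h²}(Ru) = (h¹/h²)·div_{h¹}u. In particular, if div_{h¹}u = 0 everywhere, then div_{h²}(Ru) = 0 everywhere. -/
/-- Partial derivative with respect to the first coordinate. -/
noncomputable def pd1 (f : ℝ × ℝ → ℝ) (y : ℝ × ℝ) : ℝ :=
  deriv (fun t => f (t, y.2)) y.1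

/-- Partial derivative with respect to the second coordinate. -/
noncomputable def pd2 (f : ℝ × ℝ → ℝ) (y : ℝ × ℝ) : ℝ :=
  deriv (fun t => f (y.1, t)) y.2

/-- Transformed divergence `div_h u` of the vector field `u = (u1, u2)`. -/
noncomputable def divh (h : ℝ → ℝ) (u1 u2 : ℝ × ℝ → ℝ) (y : ℝ × ℝ) : ℝ :=
  pd1 u1 y - y.2 / h y.1 * deriv h y.1 * pd2 u1 y + 1 / h y.1 * pd2 u2 y

/-! The shear `R` is built so that the product-rule term `∂_{y₁}(h¹/h²)·u₁` coming from
`∂_{y₁}((h¹/h²)u₁)` is cancelled by the `y₂`-derivative of the second component; the remaining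
terms are `h¹/h²` times those of `div_{h¹}u` once `∂_{y₁}(h¹/h²)` is expanded by the quotient
rule. -/

section PartialDerivatives

variable {f g : ℝ × ℝ → ℝ} {a : ℝ → ℝ} {y : ℝ × ℝ}

lemma DifferentiableAt.differentiableAt_slice_fst (hf : DifferentiableAt ℝ f y) :
    DifferentiableAt ℝ (fun t => f (t, y.2)) y.1 :=
  hf.comp y.1 (differentiableAt_id.prodMk (differentiableAt_const _))

lemma DifferentiableAt.differentiableAt_slice_snd (hf : DifferentiableAt ℝ f y) :
    DifferentiableAt ℝ (fun t => f (y.1, t)) y.2 :=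
  hf.comp y.2 ((differentiableAt_const _).prodMk differentiableAt_id)

lemma pd1_fst_mul (ha : DifferentiableAt ℝ a y.1)
    (hf : DifferentiableAt ℝ (fun t => f (t, y.2)) y.1) :
    pd1 (fun z => a z.1 * f z) y = deriv a y.1 * f y + a y.1 * pd1 f y :=
  (ha.hasDerivAt.mul hf.hasDerivAt).deriv

lemma pd2_fst_mul : pd2 (fun z => a z.1 * f z) y = a y.1 * pd2 f y :=
  congrFun (deriv_const_mul_field' (a y.1)) y.2

lemma pd2_sub_snd_mul (hf : DifferentiableAt ℝ (fun t => f (y.1, t)) y.2)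
    (hg : DifferentiableAt ℝ (fun t => g (y.1, t)) y.2) :
    pd2 (fun z => g z - z.2 * a z.1 * f z) y = pd2 g y - a y.1 * f y - y.2 * a y.1 * pd2 f y := by
  have hshear : HasDerivAt (fun t => t * a y.1 * f (y.1, t))
      (1 * a y.1 * f y + y.2 * a y.1 * pd2 f y) y.2 :=
    ((hasDerivAt_id y.2).mul_const (a y.1)).mul hf.hasDerivAt
  have hg' : HasDerivAt (fun t => g (y.1, t)) (pd2 g y) y.2 := hg.hasDerivAt
  exact (hg'.sub hshear).deriv.trans (by ring)

end PartialDerivatives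

lemma divh_R_eq {h1 h2 : ℝ → ℝ} {u1 u2 : ℝ × ℝ → ℝ} {y : ℝ × ℝ}
    (hh1 : DifferentiableAt ℝ h1 y.1) (hh2 : DifferentiableAt ℝ h2 y.1)
    (h1ne : h1 y.1 ≠ 0) (h2ne : h2 y.1 ≠ 0)
    (hu1₁ : DifferentiableAt ℝ (fun t => u1 (t, y.2)) y.1)
    (hu1₂ : DifferentiableAt ℝ (fun t => u1 (y.1, t)) y.2)
    (hu2₂ : DifferentiableAt ℝ (fun t => u2 (y.1, t)) y.2) :
    divh h2 (fun z => h1 z.1 / h2 z.1 * u1 z)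
        (fun z => u2 z - z.2 * h2 z.1 * deriv (fun x => h1 x / h2 x) z.1 * u1 z) y
      = h1 y.1 / h2 y.1 * divh h1 u1 u2 y := by
  have hquot : HasDerivAt (fun x => h1 x / h2 x)
      ((deriv h1 y.1 * h2 y.1 - h1 y.1 * deriv h2 y.1) / h2 y.1 ^ 2) y.1 :=
    hh1.hasDerivAt.div hh2.hasDerivAt h2ne
  have hshear := pd2_sub_snd_mul (a := fun x => h2 x * deriv (fun x => h1 x / h2 x) x) hu1₂ hu2₂
  simp only [← mul_assoc] at hshear
  rw [divh, divh, pd1_fst_mul (a := fun x => h1 x / h2 x) hquot.differentiableAt hu1₁,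
    pd2_fst_mul (a := fun x => h1 x / h2 x), hshear, hquot.deriv]
  field_simp
  ring

/-- `div_{h²}(Ru) = (h¹/h²)·div_{h¹}u` pointwise, where
`Ru = ((h¹/h²)u₁, u₂ − y₂h²∂_{y₁}(h¹/h²)u₁)`; in particular if `div_{h¹}u = 0`
everywhere then `div_{h²}(Ru) = 0` everywhere. -/
theorem divh_R_transform
    (h1 h2 : ℝ → ℝ) (u1 u2 : ℝ × ℝ → ℝ) (s : Set (ℝ × ℝ)) (hs : IsOpen s)
    (h1pos : ∀ x, 0 < h1 x) (h2pos : ∀ x, 0 < h2 x)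
    (h1c : ContDiff ℝ 1 h1) (h2c : ContDiff ℝ 1 h2)
    (hu1 : ContDiffOn ℝ 1 u1 s) (hu2 : ContDiffOn ℝ 1 u2 s) :
    (∀ y ∈ s,
      divh h2 (fun z => h1 z.1 / h2 z.1 * u1 z)
        (fun z => u2 z - z.2 * h2 z.1 * deriv (fun x => h1 x / h2 x) z.1 * u1 z) y
        = h1 y.1 / h2 y.1 * divh h1 u1 u2 y) ∧
    ((∀ y ∈ s, divh h1 u1 u2 y = 0) →
      ∀ y ∈ s,
        divh h2 (fun z => h1 z.1 / h2 z.1 * u1 z)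
          (fun z => u2 z - z.2 * h2 z.1 * deriv (fun x => h1 x / h2 x) z.1 * u1 z) y = 0) := by
  have hdiff : ∀ {u : ℝ × ℝ → ℝ}, ContDiffOn ℝ 1 u s → ∀ y ∈ s, DifferentiableAt ℝ u y :=
    fun hu y hy => (hu.differentiableOn one_ne_zero).differentiableAt (hs.mem_nhds hy)
  have key := fun y (hy : y ∈ s) =>
    divh_R_eq (h1c.differentiable one_ne_zero y.1) (h2c.differentiable one_ne_zero y.1)
      (h1pos y.1).ne' (h2pos y.1).ne' (hdiff hu1 y hy).differentiableAt_slice_fst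
      (hdiff hu1 y hy).differentiableAt_slice_snd (hdiff hu2 y hy).differentiableAt_slice_snd
  exact ⟨key, fun hdiv y hy => by rw [key y hy, hdiv y hy, mul_zero]⟩
end

section
/- Let h¹(y₁,t), h²(y₁,t) be positive functions that are twice continuously differentiable in y₁ and continuously differentiable in t, with continuous mixed derivatives ∂ₜ∂_{y₁}hⁱ, and let u = (u₁,u₂) be a continuously differentiable vector field of (y,t). Then at every point (y,t): ∂̄ₜ^{h²}(h²·Ru) = 𝕁⁻¹·∂̄ₜ^{h¹}(h¹·u) + E₁, where 𝕁⁻¹ := [[1, 0], [y₂h¹∂_{y₁}(h²/h¹), h²/h¹]] and E₁ is the vector whose first component is (∂ₜh¹/h¹ − ∂ₜh²/h²)·∂_{y₂}(y₂h¹u₁) and whose second component is (∂ₜh¹/h¹ − ∂ₜh²/h²)·y₂h²·(∂_{y₂}u₂ − y₂E·∂_{y₂}u₁) + y₂u₁·(∂ₜh²·E − h²·∂ₜE), with E := h²·∂_{y₁}(h¹/h²). -/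
/-- Transformed (ALE-type) time derivative
`∂̄ₜʰ(hw) := ∂ₜ(hw) − (1/h)(∂ₜh)·∂_{y₂}(y₂·h·w)` (one component). -/
noncomputable def Dbar (h : ℝ → ℝ → ℝ) (w : ℝ → ℝ → ℝ → ℝ) (y₁ y₂ t : ℝ) : ℝ :=
  deriv (fun s => h y₁ s * w y₁ y₂ s) t
    - 1 / h y₁ t * deriv (fun s => h y₁ s) t * deriv (fun z => z * h y₁ t * w y₁ z t) y₂

/-- `E := h²·∂_{y₁}(h¹/h²)`. -/
noncomputable def Ef (h1 h2 : ℝ → ℝ → ℝ) (x t : ℝ) : ℝ :=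
  h2 x t * deriv (fun x' => h1 x' t / h2 x' t) x

/-- First component of `Ru`: `(h¹/h²)u₁`. -/
noncomputable def RuFst (h1 h2 : ℝ → ℝ → ℝ) (u1 : ℝ → ℝ → ℝ → ℝ) : ℝ → ℝ → ℝ → ℝ :=
  fun x z s => h1 x s / h2 x s * u1 x z s

/-- Second component of `Ru`: `u₂ − y₂h²∂_{y₁}(h¹/h²)u₁`. -/
noncomputable def RuSnd (h1 h2 : ℝ → ℝ → ℝ) (u1 u2 : ℝ → ℝ → ℝ → ℝ) : ℝ → ℝ → ℝ → ℝ :=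
  fun x z s => u2 x z s - z * Ef h1 h2 x s * u1 x z s

/-! After the product rule, `∂̄ₜʰ(hw) = h∂ₜw − y₂(∂ₜh)∂_{y₂}w`. The first component needs no
calculus: `h²·(h¹/h²)u₁ = h¹u₁` identically, so the two sides differ only in the weight `(1/h)∂ₜh`
in front of the common `∂_{y₂}(y₂h¹u₁)`. The second component is an algebraic identity once
`∂_{y₁}(h²/h¹)` is eliminated through `h¹∂_{y₁}(h²/h¹) = −(h²/h¹)E`. -/

section Dbar

variable {h1 h2 : ℝ → ℝ → ℝ} {u1 u2 : ℝ → ℝ → ℝ → ℝ} {x z t : ℝ}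

theorem Dbar_eq_of_hasDerivAt {h : ℝ → ℝ → ℝ} {w : ℝ → ℝ → ℝ → ℝ} {a b c : ℝ}
    (hne : h x t ≠ 0) (ha : HasDerivAt (fun s => h x s) a t)
    (hb : HasDerivAt (fun s => w x z s) b t) (hc : HasDerivAt (fun z' => w x z' t) c z) :
    Dbar h w x z t = h x t * b - z * a * c := by
  unfold Dbar
  rw [(ha.fun_mul hb).deriv, (((hasDerivAt_id' z).mul_const (h x t)).fun_mul hc).deriv,
    ha.deriv]
  field_simp
  ring

theorem Dbar_RuFst (h2ne : ∀ s, h2 x s ≠ 0) :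
    Dbar h2 (RuFst h1 h2 u1) x z t
      = Dbar h1 u1 x z t
        + (deriv (fun s => h1 x s) t / h1 x t - deriv (fun s => h2 x s) t / h2 x t)
          * deriv (fun z' => z' * h1 x t * u1 x z' t) z := by
  have hweight : ∀ s, h2 x s * RuFst h1 h2 u1 x z s = h1 x s * u1 x z s := fun s => by
    simp only [RuFst]
    field_simp [h2ne s]
  have hflux : ∀ z', z' * h2 x t * RuFst h1 h2 u1 x z' t = z' * h1 x t * u1 x z' t := fun z' => by
    simp only [RuFst]
    field_simp [h2ne t]
  simp only [Dbar, hweight, hflux]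
  ring

theorem Ef_eq (h1x : DifferentiableAt ℝ (fun x' => h1 x' t) x)
    (h2x : DifferentiableAt ℝ (fun x' => h2 x' t) x) (h2ne : h2 x t ≠ 0) :
    Ef h1 h2 x t
      = (deriv (fun x' => h1 x' t) x * h2 x t - h1 x t * deriv (fun x' => h2 x' t) x) / h2 x t := by
  rw [Ef, deriv_fun_div h1x h2x h2ne]
  field_simp

theorem deriv_div_swap_eq_neg_Ef (h1x : DifferentiableAt ℝ (fun x' => h1 x' t) x)
    (h2x : DifferentiableAt ℝ (fun x' => h2 x' t) x) (h1ne : h1 x t ≠ 0) (h2ne : h2 x t ≠ 0) :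
    deriv (fun x' => h2 x' t / h1 x' t) x = -(h2 x t * Ef h1 h2 x t) / h1 x t ^ 2 := by
  rw [deriv_fun_div h2x h1x h1ne, Ef_eq h1x h2x h2ne]
  field_simp
  ring

theorem differentiableAt_Ef (h1x : ∀ s, DifferentiableAt ℝ (fun x' => h1 x' s) x)
    (h2x : ∀ s, DifferentiableAt ℝ (fun x' => h2 x' s) x) (h2ne : ∀ s, h2 x s ≠ 0)
    (h1t : DifferentiableAt ℝ (fun s => h1 x s) t) (h2t : DifferentiableAt ℝ (fun s => h2 x s) t)
    (h1xt : DifferentiableAt ℝ (fun s => deriv (fun x' => h1 x' s) x) t)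
    (h2xt : DifferentiableAt ℝ (fun s => deriv (fun x' => h2 x' s) x) t) :
    DifferentiableAt ℝ (fun s => Ef h1 h2 x s) t := by
  simp only [Ef_eq (h1x _) (h2x _) (h2ne _)]
  exact ((h1xt.mul h2t).sub (h1t.mul h2xt)).div h2t (h2ne t)

theorem hasDerivAt_RuSnd_time {e a b : ℝ} (he : HasDerivAt (fun s => Ef h1 h2 x s) e t)
    (ha : HasDerivAt (fun s => u1 x z s) a t) (hb : HasDerivAt (fun s => u2 x z s) b t) :
    HasDerivAt (fun s => RuSnd h1 h2 u1 u2 x z s)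
      (b - z * (e * u1 x z t + Ef h1 h2 x t * a)) t :=
  (hb.fun_sub (((hasDerivAt_const t z).fun_mul he).fun_mul ha)).congr_deriv (by ring)

theorem hasDerivAt_RuSnd_space {a b : ℝ} (ha : HasDerivAt (fun z' => u1 x z' t) a z)
    (hb : HasDerivAt (fun z' => u2 x z' t) b z) :
    HasDerivAt (fun z' => RuSnd h1 h2 u1 u2 x z' t)
      (b - (Ef h1 h2 x t * u1 x z t + z * Ef h1 h2 x t * a)) z :=
  (hb.fun_sub (((hasDerivAt_id' z).mul_const (Ef h1 h2 x t)).fun_mul ha)).congr_deriv (by ring)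

end Dbar

section Slices

variable {u : ℝ → ℝ → ℝ → ℝ}

theorem differentiable_slice_snd (hu : Differentiable ℝ (fun p : ℝ × ℝ × ℝ => u p.1 p.2.1 p.2.2))
    (x s : ℝ) : Differentiable ℝ (fun z => u x z s) :=
  hu.comp (f := fun z : ℝ => (x, z, s)) (by fun_prop)

theorem differentiable_slice_thd (hu : Differentiable ℝ (fun p : ℝ × ℝ × ℝ => u p.1 p.2.1 p.2.2))
    (x z : ℝ) : Differentiable ℝ (fun s => u x z s) :=
  hu.comp (f := fun s : ℝ => (x, z, s)) (by fun_prop)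

end Slices

theorem Dbar_R_transform_general
    (h1 h2 : ℝ → ℝ → ℝ) (u1 u2 : ℝ → ℝ → ℝ → ℝ)
    (h1pos : ∀ x t, 0 < h1 x t) (h2pos : ∀ x t, 0 < h2 x t)
    (h1y : ∀ t, ContDiff ℝ 2 (fun x => h1 x t)) (h2y : ∀ t, ContDiff ℝ 2 (fun x => h2 x t))
    (h1t : ∀ x, ContDiff ℝ 1 (fun s => h1 x s)) (h2t : ∀ x, ContDiff ℝ 1 (fun s => h2 x s))
    (h1mixd : ∀ x, Differentiable ℝ (fun s => deriv (fun x' => h1 x' s) x))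
    (h2mixd : ∀ x, Differentiable ℝ (fun s => deriv (fun x' => h2 x' s) x))
    (hu1 : ContDiff ℝ 1 (fun p : ℝ × ℝ × ℝ => u1 p.1 p.2.1 p.2.2))
    (hu2 : ContDiff ℝ 1 (fun p : ℝ × ℝ × ℝ => u2 p.1 p.2.1 p.2.2)) :
    ∀ y₁ y₂ t : ℝ,
      (Dbar h2 (RuFst h1 h2 u1) y₁ y₂ t
        = Dbar h1 u1 y₁ y₂ t
          + (deriv (fun s => h1 y₁ s) t / h1 y₁ t
             - deriv (fun s => h2 y₁ s) t / h2 y₁ t)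
            * deriv (fun z => z * h1 y₁ t * u1 y₁ z t) y₂) ∧
      (Dbar h2 (RuSnd h1 h2 u1 u2) y₁ y₂ t
        = y₂ * h1 y₁ t * deriv (fun x => h2 x t / h1 x t) y₁ * Dbar h1 u1 y₁ y₂ t
          + h2 y₁ t / h1 y₁ t * Dbar h1 u2 y₁ y₂ t
          + (deriv (fun s => h1 y₁ s) t / h1 y₁ t
             - deriv (fun s => h2 y₁ s) t / h2 y₁ t)
            * (y₂ * h2 y₁ t
                * (deriv (fun z => u2 y₁ z t) y₂
                   - y₂ * Ef h1 h2 y₁ t * deriv (fun z => u1 y₁ z t) y₂))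
          + y₂ * u1 y₁ y₂ t
            * (deriv (fun s => h2 y₁ s) t * Ef h1 h2 y₁ t
               - h2 y₁ t * deriv (fun s => Ef h1 h2 y₁ s) t)) := by
  intro y₁ y₂ t
  have h1ne : ∀ x s, h1 x s ≠ 0 := fun x s => (h1pos x s).ne'
  have h2ne : ∀ x s, h2 x s ≠ 0 := fun x s => (h2pos x s).ne'
  have h1x : ∀ s, Differentiable ℝ (fun x => h1 x s) := fun s => (h1y s).differentiable two_ne_zero
  have h2x : ∀ s, Differentiable ℝ (fun x => h2 x s) := fun s => (h2y s).differentiable two_ne_zero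
  have h1s := (h1t y₁).differentiable one_ne_zero t
  have h2s := (h2t y₁).differentiable one_ne_zero t
  have hEs := differentiableAt_Ef (fun s => h1x s y₁) (fun s => h2x s y₁) (h2ne y₁) h1s h2s
    (h1mixd y₁ t) (h2mixd y₁ t)
  have hu1d := hu1.differentiable one_ne_zero
  have hu2d := hu2.differentiable one_ne_zero
  have hu1s := (differentiable_slice_thd hu1d y₁ y₂ t).hasDerivAt
  have hu2s := (differentiable_slice_thd hu2d y₁ y₂ t).hasDerivAt
  have hu1z := (differentiable_slice_snd hu1d y₁ t y₂).hasDerivAt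
  have hu2z := (differentiable_slice_snd hu2d y₁ t y₂).hasDerivAt
  refine ⟨Dbar_RuFst (h2ne y₁), ?_⟩
  rw [Dbar_eq_of_hasDerivAt (h2ne y₁ t) h2s.hasDerivAt
      (hasDerivAt_RuSnd_time hEs.hasDerivAt hu1s hu2s) (hasDerivAt_RuSnd_space hu1z hu2z),
    Dbar_eq_of_hasDerivAt (h1ne y₁ t) h1s.hasDerivAt hu1s hu1z,
    Dbar_eq_of_hasDerivAt (h1ne y₁ t) h1s.hasDerivAt hu2s hu2z,
    deriv_div_swap_eq_neg_Ef (h1x t y₁) (h2x t y₁) (h1ne y₁ t) (h2ne y₁ t)]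
  field_simp [h1ne y₁ t, h2ne y₁ t]
  ring

/-- `∂̄ₜ^{h²}(h²·Ru) = 𝕁⁻¹·∂̄ₜ^{h¹}(h¹·u) + E₁` componentwise at every
point `(y,t)`, with `𝕁⁻¹ = [[1,0],[y₂h¹∂_{y₁}(h²/h¹), h²/h¹]]` and the explicit
error vector `E₁`. -/
theorem Dbar_R_transform
    (h1 h2 : ℝ → ℝ → ℝ) (u1 u2 : ℝ → ℝ → ℝ → ℝ)
    (h1pos : ∀ x t, 0 < h1 x t) (h2pos : ∀ x t, 0 < h2 x t)
    (h1y : ∀ t, ContDiff ℝ 2 (fun x => h1 x t)) (h2y : ∀ t, ContDiff ℝ 2 (fun x => h2 x t))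
    (h1t : ∀ x, ContDiff ℝ 1 (fun s => h1 x s)) (h2t : ∀ x, ContDiff ℝ 1 (fun s => h2 x s))
    (h1mixd : ∀ x, Differentiable ℝ (fun s => deriv (fun x' => h1 x' s) x))
    (h2mixd : ∀ x, Differentiable ℝ (fun s => deriv (fun x' => h2 x' s) x))
    (h1mixc : Continuous (fun p : ℝ × ℝ => deriv (fun s => deriv (fun x' => h1 x' s) p.1) p.2))
    (h2mixc : Continuous (fun p : ℝ × ℝ => deriv (fun s => deriv (fun x' => h2 x' s) p.1) p.2))
    (hu1 : ContDiff ℝ 1 (fun p : ℝ × ℝ × ℝ => u1 p.1 p.2.1 p.2.2))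
    (hu2 : ContDiff ℝ 1 (fun p : ℝ × ℝ × ℝ => u2 p.1 p.2.1 p.2.2)) :
    ∀ y₁ y₂ t : ℝ,
      (Dbar h2 (RuFst h1 h2 u1) y₁ y₂ t
        = Dbar h1 u1 y₁ y₂ t
          + (deriv (fun s => h1 y₁ s) t / h1 y₁ t
             - deriv (fun s => h2 y₁ s) t / h2 y₁ t)
            * deriv (fun z => z * h1 y₁ t * u1 y₁ z t) y₂) ∧
      (Dbar h2 (RuSnd h1 h2 u1 u2) y₁ y₂ t
        = y₂ * h1 y₁ t * deriv (fun x => h2 x t / h1 x t) y₁ * Dbar h1 u1 y₁ y₂ t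
          + h2 y₁ t / h1 y₁ t * Dbar h1 u2 y₁ y₂ t
          + (deriv (fun s => h1 y₁ s) t / h1 y₁ t
             - deriv (fun s => h2 y₁ s) t / h2 y₁ t)
            * (y₂ * h2 y₁ t
                * (deriv (fun z => u2 y₁ z t) y₂
                   - y₂ * Ef h1 h2 y₁ t * deriv (fun z => u1 y₁ z t) y₂))
          + y₂ * u1 y₁ y₂ t
            * (deriv (fun s => h2 y₁ s) t * Ef h1 h2 y₁ t
               - h2 y₁ t * deriv (fun s => Ef h1 h2 y₁ s) t)) :=
  Dbar_R_transform_general h1 h2 u1 u2 h1pos h2pos h1y h2y h1t h2t h1mixd h2mixd hu1 hu2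
end

section
/- Let L > 0, let D = [0,L] × [0,1], and let v : D → ℝ² be continuously differentiable. Then for every y₁ ∈ [0,L]: ∫₀¹ |v(y₁,y₂)|² dy₂ ≤ ∫₀¹ |v(0,y₂)|² dy₂ + 2·(∫_D |v|² dy)^{1/2} · (∫_D |∇v|² dy)^{1/2}, where |∇v|² denotes the sum of the squares of all first-order partial derivatives of the components of v. -/
open MeasureTheory

/-!
For fixed `y₂`, the fundamental theorem of calculus in `y₁` gives
`|v(y₁,y₂)|² - |v(0,y₂)|² = ∫₀^{y₁} 2 v·∂₁v ≤ ∫₀^L |2 v·∂₁v|`. Integrating over `y₂` and using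
Fubini bounds the left side by `∫_D |2 v·∂₁v|`, and Cauchy–Schwarz, first pointwise and then in
`L²(D)`, bounds this by `2 ‖v‖₂ ‖∇v‖₂`.

Since `pd1`, `pd2` take junk values where a slice is not differentiable (possibly on `∂D`), the
argument runs with `fderivWithin` on the closed rectangle, which is continuous up to the boundary
and agrees with `pd1`, `pd2` on the interior; the boundary of a convex set is null.
-/

open Set Filter Topology

section Slices

variable {f : ℝ × ℝ → ℝ} {f' : ℝ × ℝ →L[ℝ] ℝ} {x y : ℝ}

lemma HasFDerivWithinAt.hasDerivWithinAt_fst_slice {s t : Set ℝ}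
    (hf : HasFDerivWithinAt f f' (s ×ˢ t) (x, y)) (hy : y ∈ t) :
    HasDerivWithinAt (fun x' => f (x', y)) (f' (1, 0)) s x :=
  hf.comp_hasDerivWithinAt x ((hasDerivWithinAt_id x s).prodMk (hasDerivWithinAt_const x s y))
    fun _ hx' => mk_mem_prod hx' hy

lemma pd1_eq_of_hasFDerivAt (hf : HasFDerivAt f f' (x, y)) : pd1 f (x, y) = f' (1, 0) :=
  (hf.comp_hasDerivAt x ((hasDerivAt_id x).prodMk (hasDerivAt_const x y))).deriv

lemma pd2_eq_of_hasFDerivAt (hf : HasFDerivAt f f' (x, y)) : pd2 f (x, y) = f' (0, 1) :=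
  (hf.comp_hasDerivAt y ((hasDerivAt_const y x).prodMk (hasDerivAt_id y))).deriv

end Slices

lemma sub_le_setIntegral_abs_deriv {g g' : ℝ → ℝ} {a b x : ℝ} (hg : ContinuousOn g (Icc a b))
    (hg' : ContinuousOn g' (Icc a b)) (hderiv : ∀ t ∈ Ioo a b, HasDerivAt g (g' t) t)
    (hx : x ∈ Icc a b) :
    g x - g a ≤ ∫ t in Icc a b, |g' t| := by
  have hxb : Icc a x ⊆ Icc a b := Icc_subset_Icc_right hx.2
  calc g x - g a = ∫ t in a..x, g' t :=
        (intervalIntegral.integral_eq_sub_of_hasDerivAt_of_le hx.1 (hg.mono hxb)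
          (fun t ht => hderiv t ⟨ht.1, ht.2.trans_le hx.2⟩)
          ((hg'.mono hxb).intervalIntegrable_of_Icc hx.1)).symm
    _ ≤ ∫ t in a..x, |g' t| :=
        (le_abs_self _).trans (intervalIntegral.abs_integral_le_integral_abs hx.1)
    _ ≤ ∫ t in a..b, |g' t| :=
        intervalIntegral.integral_mono_interval le_rfl hx.1 hx.2
          (ae_of_all _ fun _ => abs_nonneg _) (hg'.abs.intervalIntegrable_of_Icc (hx.1.trans hx.2))
    _ = ∫ t in Icc a b, |g' t| := by
        rw [intervalIntegral.integral_of_le (hx.1.trans hx.2), integral_Icc_eq_integral_Ioc]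

lemma setIntegral_prod_symm {α β E : Type*} [MeasurableSpace α] [MeasurableSpace β]
    [NormedAddCommGroup E] [NormedSpace ℝ E] {μ : Measure α} {ν : Measure β} [SFinite μ]
    [SFinite ν] (f : α × β → E) {s : Set α} {t : Set β}
    (hf : IntegrableOn f (s ×ˢ t) (μ.prod ν)) :
    ∫ z in s ×ˢ t, f z ∂μ.prod ν = ∫ y in t, ∫ x in s, f (x, y) ∂μ ∂ν := by
  rw [IntegrableOn, ← Measure.prod_restrict] at hf
  rw [← Measure.prod_restrict]
  exact integral_prod_symm f hf

lemma integral_sqrt_mul_sqrt_le {α : Type*} [MeasurableSpace α] {μ : Measure α} {F G : α → ℝ}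
    (hF0 : ∀ x, 0 ≤ F x) (hG0 : ∀ x, 0 ≤ G x) (hF : Integrable F μ) (hG : Integrable G μ) :
    ∫ x, √(F x) * √(G x) ∂μ ≤ √(∫ x, F x ∂μ) * √(∫ x, G x ∂μ) := by
  have memLp_sqrt : ∀ {H : α → ℝ}, (∀ x, 0 ≤ H x) → Integrable H μ →
      MemLp (fun x => √(H x)) (ENNReal.ofReal 2) μ := by
    intro H hH0 hH
    rw [ENNReal.ofReal_ofNat,
      memLp_two_iff_integrable_sq (Real.continuous_sqrt.comp_aestronglyMeasurable hH.1)]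
    simpa only [Real.sq_sqrt (hH0 _)] using hH
  have holder := integral_mul_le_Lp_mul_Lq_of_nonneg Real.HolderConjugate.two_two
    (ae_of_all _ fun x => Real.sqrt_nonneg (F x)) (ae_of_all _ fun x => Real.sqrt_nonneg (G x))
    (memLp_sqrt hF0 hF) (memLp_sqrt hG0 hG)
  simpa only [Real.rpow_two, Real.sq_sqrt (hF0 _), Real.sq_sqrt (hG0 _), ← Real.sqrt_eq_rpow]
    using holder

lemma setIntegral_congr_of_eqOn_interior {α E : Type*} [TopologicalSpace α] [MeasurableSpace α]
    [OpensMeasurableSpace α] [NormedAddCommGroup E] [NormedSpace ℝ E] {μ : Measure α}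
    {s : Set α} {f g : α → E} (hs : μ (frontier s) = 0) (hfg : EqOn f g (interior s)) :
    ∫ x in s, f x ∂μ = ∫ x in s, g x ∂μ := by
  have hs' := interior_ae_eq_of_null_frontier hs
  rw [← setIntegral_congr_set hs', setIntegral_congr_fun measurableSet_interior hfg,
    setIntegral_congr_set hs']

lemma abs_two_mul_add_two_mul_le (v₁ v₂ a₁ b₁ a₂ b₂ : ℝ) :
    |2 * v₁ * a₁ + 2 * v₂ * a₂|
      ≤ 2 * (√(v₁ ^ 2 + v₂ ^ 2) * √(a₁ ^ 2 + b₁ ^ 2 + a₂ ^ 2 + b₂ ^ 2)) := by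
  refine abs_le_of_sq_le_sq ?_ (by positivity)
  rw [mul_pow, mul_pow, Real.sq_sqrt (by positivity), Real.sq_sqrt (by positivity)]
  nlinarith [sq_nonneg (v₁ * a₂ - v₂ * a₁), mul_nonneg (add_nonneg (sq_nonneg v₁) (sq_nonneg v₂))
    (add_nonneg (sq_nonneg b₁) (sq_nonneg b₂))]

lemma intervalIntegral_le_add_setIntegral_abs_deriv {Φ w : ℝ × ℝ → ℝ} {a b c d x : ℝ}
    (hcd : c ≤ d) (hΦ : ContinuousOn Φ (Icc a b ×ˢ Icc c d))
    (hw : ContinuousOn w (Icc a b ×ˢ Icc c d))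
    (hderiv : ∀ t ∈ Ioo a b, ∀ y ∈ Icc c d, HasDerivAt (fun t' => Φ (t', y)) (w (t, y)) t)
    (hx : x ∈ Icc a b) :
    ∫ y in c..d, Φ (x, y) ≤ (∫ y in c..d, Φ (a, y)) + ∫ z in Icc a b ×ˢ Icc c d, |w z| := by
  have ha : a ∈ Icc a b := left_mem_Icc.2 (hx.1.trans hx.2)
  have hrow : ∀ x ∈ Icc a b, ContinuousOn (fun y => Φ (x, y)) (Icc c d) := fun x hx =>
    hΦ.comp (continuous_const.prodMk continuous_id).continuousOn fun _ hy => mk_mem_prod hx hy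
  have hcol : ∀ {g : ℝ × ℝ → ℝ}, ContinuousOn g (Icc a b ×ˢ Icc c d) → ∀ y ∈ Icc c d,
      ContinuousOn (fun t => g (t, y)) (Icc a b) := fun hg y hy =>
    hg.comp (continuous_id.prodMk continuous_const).continuousOn fun _ ht => mk_mem_prod ht hy
  have hwint : IntegrableOn (fun z => |w z|) (Icc a b ×ˢ Icc c d) (volume.prod volume) :=
    hw.abs.integrableOn_compact (isCompact_Icc.prod isCompact_Icc)
  have hslice : ∀ y ∈ Icc c d, Φ (x, y) - Φ (a, y) ≤ ∫ t in Icc a b, |w (t, y)| := fun y hy =>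
    sub_le_setIntegral_abs_deriv (hcol hΦ y hy) (hcol hw y hy) (fun t ht => hderiv t ht y hy) hx
  have hsub : (∫ y in c..d, Φ (x, y)) - ∫ y in c..d, Φ (a, y)
      = ∫ y in Icc c d, (Φ (x, y) - Φ (a, y)) := by
    rw [← intervalIntegral.integral_sub ((hrow x hx).intervalIntegrable_of_Icc hcd)
      ((hrow a ha).intervalIntegrable_of_Icc hcd), intervalIntegral.integral_of_le hcd,
      integral_Icc_eq_integral_Ioc]
  have hmono : ∫ y in Icc c d, (Φ (x, y) - Φ (a, y))
      ≤ ∫ y in Icc c d, ∫ t in Icc a b, |w (t, y)| :=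
    setIntegral_mono_on (((hrow x hx).sub (hrow a ha)).integrableOn_compact isCompact_Icc)
      (by rw [IntegrableOn, ← Measure.prod_restrict] at hwint; exact hwint.integral_prod_right)
      measurableSet_Icc hslice
  rw [Measure.volume_eq_prod, setIntegral_prod_symm _ hwint]
  linarith

section VectorField

variable {v₁ v₂ : ℝ × ℝ → ℝ}

lemma setIntegral_abs_deriv_sq_add_sq_le {S : Set (ℝ × ℝ)} (hS : IsCompact S)
    (hSc : Convex ℝ S) (hSd : UniqueDiffOn ℝ S) (hv₁ : ContDiffOn ℝ 1 v₁ S)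
    (hv₂ : ContDiffOn ℝ 1 v₂ S) :
    ∫ z in S, |2 * v₁ z * fderivWithin ℝ v₁ S z (1, 0) + 2 * v₂ z * fderivWithin ℝ v₂ S z (1, 0)|
      ≤ 2 * √(∫ z in S, (v₁ z ^ 2 + v₂ z ^ 2))
        * √(∫ z in S, (pd1 v₁ z ^ 2 + pd2 v₁ z ^ 2 + pd1 v₂ z ^ 2 + pd2 v₂ z ^ 2)) := by
  have hD : ∀ {f : ℝ × ℝ → ℝ}, ContDiffOn ℝ 1 f S → ∀ e,
      ContinuousOn (fun z => fderivWithin ℝ f S z e) S :=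
    fun hf _ => (hf.continuousOn_fderivWithin hSd le_rfl).clm_apply continuousOn_const
  set G : ℝ × ℝ → ℝ := fun z =>
    fderivWithin ℝ v₁ S z (1, 0) ^ 2 + fderivWithin ℝ v₁ S z (0, 1) ^ 2
      + fderivWithin ℝ v₂ S z (1, 0) ^ 2 + fderivWithin ℝ v₂ S z (0, 1) ^ 2
  have hFc : ContinuousOn (fun z => v₁ z ^ 2 + v₂ z ^ 2) S :=
    (hv₁.continuousOn.pow 2).add (hv₂.continuousOn.pow 2)
  have hGc : ContinuousOn G S :=
    ((((hD hv₁ _).pow 2).add ((hD hv₁ _).pow 2)).add ((hD hv₂ _).pow 2)).add ((hD hv₂ _).pow 2)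
  have hG_pd : ∫ z in S, G z
      = ∫ z in S, (pd1 v₁ z ^ 2 + pd2 v₁ z ^ 2 + pd1 v₂ z ^ 2 + pd2 v₂ z ^ 2) := by
    refine setIntegral_congr_of_eqOn_interior (hSc.addHaar_frontier volume) fun z hz => ?_
    have hfderiv : ∀ {f : ℝ × ℝ → ℝ}, ContDiffOn ℝ 1 f S →
        HasFDerivAt f (fderivWithin ℝ f S z) z := fun hf =>
      (hf.differentiableOn one_ne_zero z (interior_subset hz)).hasFDerivWithinAt.hasFDerivAt
        (mem_interior_iff_mem_nhds.1 hz)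
    obtain ⟨x, y⟩ := z
    simp only [G, pd1_eq_of_hasFDerivAt (hfderiv hv₁), pd2_eq_of_hasFDerivAt (hfderiv hv₁),
      pd1_eq_of_hasFDerivAt (hfderiv hv₂), pd2_eq_of_hasFDerivAt (hfderiv hv₂)]
  calc _ ≤ ∫ z in S, 2 * (√(v₁ z ^ 2 + v₂ z ^ 2) * √(G z)) :=
        integral_mono_of_nonneg (ae_of_all _ fun _ => abs_nonneg _)
          ((continuousOn_const.mul (hFc.sqrt.mul hGc.sqrt)).integrableOn_compact hS)
          (ae_of_all _ fun z => abs_two_mul_add_two_mul_le _ _ _ _ _ _)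
    _ = 2 * ∫ z in S, √(v₁ z ^ 2 + v₂ z ^ 2) * √(G z) := integral_const_mul _ _
    _ ≤ 2 * (√(∫ z in S, (v₁ z ^ 2 + v₂ z ^ 2)) * √(∫ z in S, G z)) := by
        gcongr
        exact integral_sqrt_mul_sqrt_le (fun _ => by positivity) (fun _ => by positivity)
          (hFc.integrableOn_compact hS) (hGc.integrableOn_compact hS)
    _ = _ := by rw [hG_pd, mul_assoc]

lemma intervalIntegral_sq_add_sq_le {a b c d x : ℝ} (hab : a < b) (hcd : c < d)
    (hv₁ : ContDiffOn ℝ 1 v₁ (Icc a b ×ˢ Icc c d)) (hv₂ : ContDiffOn ℝ 1 v₂ (Icc a b ×ˢ Icc c d))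
    (hx : x ∈ Icc a b) :
    ∫ y in c..d, (v₁ (x, y) ^ 2 + v₂ (x, y) ^ 2)
      ≤ (∫ y in c..d, (v₁ (a, y) ^ 2 + v₂ (a, y) ^ 2))
        + ∫ z in Icc a b ×ˢ Icc c d, |2 * v₁ z * fderivWithin ℝ v₁ (Icc a b ×ˢ Icc c d) z (1, 0)
          + 2 * v₂ z * fderivWithin ℝ v₂ (Icc a b ×ˢ Icc c d) z (1, 0)| := by
  set S := Icc a b ×ˢ Icc c d
  have hSd : UniqueDiffOn ℝ S := (uniqueDiffOn_Icc hab).prod (uniqueDiffOn_Icc hcd)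
  have hD : ∀ {f : ℝ × ℝ → ℝ}, ContDiffOn ℝ 1 f S →
      ContinuousOn (fun z => fderivWithin ℝ f S z (1, 0)) S := fun hf =>
    (hf.continuousOn_fderivWithin hSd le_rfl).clm_apply continuousOn_const
  have hslice : ∀ {f : ℝ × ℝ → ℝ}, ContDiffOn ℝ 1 f S → ∀ t ∈ Ioo a b, ∀ y ∈ Icc c d,
      HasDerivAt (fun t' => f (t', y)) (fderivWithin ℝ f S (t, y) (1, 0)) t := fun hf t ht y hy =>
    ((hf.differentiableOn one_ne_zero _ ⟨Ioo_subset_Icc_self ht, hy⟩).hasFDerivWithinAt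
      |>.hasDerivWithinAt_fst_slice hy).hasDerivAt (Icc_mem_nhds ht.1 ht.2)
  refine intervalIntegral_le_add_setIntegral_abs_deriv hcd.le
    ((hv₁.continuousOn.pow 2).add (hv₂.continuousOn.pow 2))
    (((continuousOn_const.mul hv₁.continuousOn).mul (hD hv₁)).add
      ((continuousOn_const.mul hv₂.continuousOn).mul (hD hv₂))) (fun t ht y hy => ?_) hx
  exact ((hslice hv₁ t ht y hy).pow 2).add ((hslice hv₂ t ht y hy).pow 2) |>.congr_deriv
    (by ring)

end VectorField

/-- for `v` continuously differentiable on `D = [0,L]×[0,1]`,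
`∫₀¹ |v(y₁,·)|² ≤ ∫₀¹ |v(0,·)|² + 2(∫_D|v|²)^{1/2}(∫_D|∇v|²)^{1/2}`
for every `y₁ ∈ [0,L]`. -/
theorem line_integral_estimate
    (L : ℝ) (hL : 0 < L) (v1 v2 : ℝ × ℝ → ℝ)
    (hv1 : ContDiffOn ℝ 1 v1 (Set.Icc (0:ℝ) L ×ˢ Set.Icc (0:ℝ) 1))
    (hv2 : ContDiffOn ℝ 1 v2 (Set.Icc (0:ℝ) L ×ˢ Set.Icc (0:ℝ) 1)) :
    ∀ y₁ ∈ Set.Icc (0:ℝ) L,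
      (∫ y₂ in (0:ℝ)..1, (v1 (y₁, y₂) ^ 2 + v2 (y₁, y₂) ^ 2))
        ≤ (∫ y₂ in (0:ℝ)..1, (v1 (0, y₂) ^ 2 + v2 (0, y₂) ^ 2))
          + 2 * Real.sqrt (∫ y in Set.Icc (0:ℝ) L ×ˢ Set.Icc (0:ℝ) 1,
                (v1 y ^ 2 + v2 y ^ 2))
              * Real.sqrt (∫ y in Set.Icc (0:ℝ) L ×ˢ Set.Icc (0:ℝ) 1,
                (pd1 v1 y ^ 2 + pd2 v1 y ^ 2 + pd1 v2 y ^ 2 + pd2 v2 y ^ 2)) := by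
  intro y₁ hy₁
  have hslices := intervalIntegral_sq_add_sq_le hL one_pos hv1 hv2 hy₁
  have henergy := setIntegral_abs_deriv_sq_add_sq_le (isCompact_Icc.prod isCompact_Icc)
    ((convex_Icc 0 L).prod (convex_Icc 0 1)) ((uniqueDiffOn_Icc hL).prod (uniqueDiffOn_Icc one_pos))
    hv1 hv2
  linarith
end

section
/- Let α ∈ (0,1) and K > 0, and let h¹, h² be positive twice continuously differentiable real functions of y₁ satisfying α ≤ hⁱ(y₁) ≤ α⁻¹ and |∂_{y₁}hⁱ(y₁)| ≤ K for i = 1,2. Then there exists a constant C depending only on α and K such that for every continuously differentiable vector field v and every point y = (y₁,y₂) with y₂ ∈ [0,1], each entry of the matrix E₂(v)(y) is bounded in absolute value by C·[ (|h̄| + |∂_{y₁}h̄|)·(|v| + |∇v|) + (|h̄|·|∂²_{y₁}h¹| + |∂²_{y₁}h̄|)·|v| ] evaluated at y, where h̄ := h¹ − h². -/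
/-!
Write `h̄ = h¹ - h²`. The quotient rule gives `E = h²·(h¹/h²)' = h̄' - h̄·h²'/h²`, so `E` is of
first order in `h̄`. Differentiating once more and substituting `h²'' = h¹'' - h̄''` bounds `E'`
by `|h̄| + |h̄'| + |h̄||h¹''| + |h̄''|`, up to constants depending only on `α ≤ h² ≤ α⁻¹`,
`|h̄| ≤ α⁻¹` and `|h²'| ≤ K`. The entries of `E₂(v)` are `v₁E/h² + h̄/h²·∂₁v₁`, `h̄/h²·∂₂v₁`,
`-y₂(E'v₁ + E∂₁v₁)` and `-E(v₁ + y₂∂₂v₁)`, so for `|y₂| ≤ 1` each is bounded by the stated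
expression times `C = 4((1 + K)/α)²`.
-/

open Matrix

/-- `E := h²·∂_{y₁}(h¹/h²)`. -/
noncomputable def Efun (h1 h2 : ℝ → ℝ) (x : ℝ) : ℝ :=
  h2 x * deriv (fun t => h1 t / h2 t) x

/-- The error matrix `E₂(v)`. -/
noncomputable def E2mat (h1 h2 : ℝ → ℝ) (v1 : ℝ × ℝ → ℝ) (y : ℝ × ℝ) :
    Matrix (Fin 2) (Fin 2) ℝ :=
  !![v1 y * Efun h1 h2 y.1 / h2 y.1 + (h1 y.1 - h2 y.1) / h2 y.1 * pd1 v1 y,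
     (h1 y.1 - h2 y.1) / h2 y.1 * pd2 v1 y;
     -y.2 * pd1 (fun z => Efun h1 h2 z.1 * v1 z) y,
     -Efun h1 h2 y.1 * pd2 (fun z => z.2 * v1 z) y]

section PartialDerivatives

variable {v : ℝ × ℝ → ℝ} {y : ℝ × ℝ}

theorem pd1_comp_fst_mul {f : ℝ → ℝ} (hf : DifferentiableAt ℝ f y.1)
    (hv : DifferentiableAt ℝ v y) :
    pd1 (fun z => f z.1 * v z) y = deriv f y.1 * v y + f y.1 * pd1 v y :=
  deriv_fun_mul hf (hv.comp y.1 (differentiableAt_id.prodMk (differentiableAt_const _)))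

theorem pd2_snd_mul (hv : DifferentiableAt ℝ v y) :
    pd2 (fun z => z.2 * v z) y = v y + y.2 * pd2 v y := by
  have hslice : DifferentiableAt ℝ (fun t => v (y.1, t)) y.2 :=
    hv.comp y.2 ((differentiableAt_const y.1).prodMk differentiableAt_id)
  simpa [pd2] using deriv_fun_mul differentiableAt_fun_id hslice

end PartialDerivatives

theorem abs_sub_sub_add_le {G : Type*} [AddCommGroup G] [LinearOrder G] [IsOrderedAddMonoid G]
    (a b c d : G) : |a - b - c + d| ≤ |a| + |b| + |c| + |d| :=
  (abs_add_le _ _).trans (add_le_add_left ((abs_sub _ _).trans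
    (add_le_add_left (abs_sub _ _) _)) _)

theorem abs_div_le_div_of_le {𝕜 : Type*} [Field 𝕜] [LinearOrder 𝕜] [IsStrictOrderedRing 𝕜]
    {α a b M : 𝕜} (hα : 0 < α) (hb : α ≤ b) (ha : |a| ≤ M) :
    |a / b| ≤ M / α := by
  rw [abs_div, abs_of_pos (hα.trans_le hb)]
  exact div_le_div₀ ((abs_nonneg a).trans ha) ha hα hb

theorem deriv_sub_of_differentiable {𝕜 F : Type*} [NontriviallyNormedField 𝕜]
    [NormedAddCommGroup F] [NormedSpace 𝕜 F] {f g : 𝕜 → F} (hf : Differentiable 𝕜 f)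
    (hg : Differentiable 𝕜 g) : deriv (f - g) = deriv f - deriv g :=
  funext fun x => deriv_sub (hf x) (hg x)

noncomputable def errorConst (α K : ℝ) : ℝ := (1 + K) / α

section ErrorConst

variable {α K : ℝ}

theorem one_le_errorConst (hα : 0 < α) (hα1 : α ≤ 1) (hK : 0 ≤ K) : 1 ≤ errorConst α K := by
  rw [errorConst, le_div_iff₀ hα]; linarith

theorem div_le_errorConst (hα : 0 < α) : K / α ≤ errorConst α K := by
  unfold errorConst; gcongr; linarith

theorem inv_le_errorConst (hα : 0 < α) (hK : 0 ≤ K) : α⁻¹ ≤ errorConst α K := by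
  rw [errorConst, inv_eq_one_div]; gcongr; linarith

end ErrorConst

section ErrorCoefficient

variable {h1 h2 : ℝ → ℝ} {α K : ℝ}

theorem Efun_apply_eq {x : ℝ} (hd1 : DifferentiableAt ℝ h1 x) (hd2 : DifferentiableAt ℝ h2 x)
    (hx : h2 x ≠ 0) :
    Efun h1 h2 x = deriv (h1 - h2) x - (h1 - h2) x * deriv h2 x / h2 x := by
  rw [Efun, deriv_fun_div hd1 hd2 hx, deriv_sub hd1 hd2, Pi.sub_apply]
  field_simp
  ring

theorem Efun_eq (hd1 : Differentiable ℝ h1) (hd2 : Differentiable ℝ h2)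
    (h2ne : ∀ x, h2 x ≠ 0) :
    Efun h1 h2 = fun x => deriv (h1 - h2) x - (h1 - h2) x * deriv h2 x / h2 x :=
  funext fun x => Efun_apply_eq (hd1 x) (hd2 x) (h2ne x)

theorem differentiable_Efun (hc1 : ContDiff ℝ 2 h1) (hc2 : ContDiff ℝ 2 h2)
    (h2ne : ∀ x, h2 x ≠ 0) : Differentiable ℝ (Efun h1 h2) := by
  have hd1 := hc1.differentiable two_ne_zero
  have hd2 := hc2.differentiable two_ne_zero
  rw [Efun_eq hd1 hd2 h2ne, deriv_sub_of_differentiable hd1 hd2]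
  exact (hc1.differentiable_deriv_two.sub hc2.differentiable_deriv_two).sub
    (((hd1.sub hd2).mul hc2.differentiable_deriv_two).div hd2 h2ne)

theorem deriv_Efun (hc1 : ContDiff ℝ 2 h1) (hc2 : ContDiff ℝ 2 h2) (h2ne : ∀ x, h2 x ≠ 0)
    (x : ℝ) :
    deriv (Efun h1 h2) x = deriv (deriv (h1 - h2)) x - deriv (h1 - h2) x * deriv h2 x / h2 x
      - (h1 - h2) x * deriv (deriv h2) x / h2 x + (h1 - h2) x * (deriv h2 x / h2 x) ^ 2 := by
  have hd1 := hc1.differentiable two_ne_zero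
  have hd2 := hc2.differentiable two_ne_zero
  have hdd2 := hc2.differentiable_deriv_two
  have hdg : Differentiable ℝ (deriv (h1 - h2)) := by
    rw [deriv_sub_of_differentiable hd1 hd2]; exact hc1.differentiable_deriv_two.sub hdd2
  have hnum : DifferentiableAt ℝ (fun x => (h1 - h2) x * deriv h2 x) x :=
    ((hd1.sub hd2) x).mul (hdd2 x)
  rw [Efun_eq hd1 hd2 h2ne, deriv_fun_sub (hdg x) (hnum.fun_div (hd2 x) (h2ne x)),
    deriv_fun_div hnum (hd2 x) (h2ne x), deriv_fun_mul ((hd1.sub hd2) x) (hdd2 x)]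
  field_simp [h2ne x]
  ring

theorem abs_Efun_le {x : ℝ} (hα : 0 < α) (hα1 : α ≤ 1) (hd1 : DifferentiableAt ℝ h1 x)
    (hd2 : DifferentiableAt ℝ h2 x) (hl2 : α ≤ h2 x) (hK2 : |deriv h2 x| ≤ K) :
    |Efun h1 h2 x| ≤ errorConst α K * (|(h1 - h2) x| + |deriv (h1 - h2) x|) := by
  have hK : 0 ≤ K := (abs_nonneg _).trans hK2
  have hc := one_le_errorConst hα hα1 hK
  have hKc := div_le_errorConst (K := K) hα
  have hquot : |(h1 - h2) x * deriv h2 x / h2 x| ≤ K / α * |(h1 - h2) x| := by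
    rw [← mul_div_right_comm]
    refine abs_div_le_div_of_le hα hl2 ?_
    rw [abs_mul, mul_comm]
    exact mul_le_mul_of_nonneg_right hK2 (abs_nonneg _)
  rw [Efun_apply_eq hd1 hd2 (hα.trans_le hl2).ne']
  calc _ ≤ |deriv (h1 - h2) x| + K / α * |(h1 - h2) x| := (abs_sub _ _).trans (by linarith)
    _ ≤ _ := by
      linarith [mul_le_mul_of_nonneg_right hKc (abs_nonneg ((h1 - h2) x)),
        le_mul_of_one_le_left (abs_nonneg (deriv (h1 - h2) x)) hc]

end ErrorCoefficient

section SecondOrderBound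

variable {h1 h2 : ℝ → ℝ} {α K : ℝ}

theorem abs_deriv_Efun_le' (hα : 0 < α) (hc1 : ContDiff ℝ 2 h1) (hc2 : ContDiff ℝ 2 h2)
    (hl2 : ∀ x, α ≤ h2 x) {x : ℝ} (hg : |(h1 - h2) x| ≤ α⁻¹) (hK2 : |deriv h2 x| ≤ K) :
    |deriv (Efun h1 h2) x| ≤ |deriv (deriv (h1 - h2)) x| + |deriv (h1 - h2) x| * K / α
      + (|(h1 - h2) x| * |deriv (deriv h1) x| + α⁻¹ * |deriv (deriv (h1 - h2)) x|) / α
      + |(h1 - h2) x| * (K / α) ^ 2 := by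
  have hdd : deriv (deriv h2) x = deriv (deriv h1) x - deriv (deriv (h1 - h2)) x := by
    rw [deriv_sub_of_differentiable (hc1.differentiable two_ne_zero)
      (hc2.differentiable two_ne_zero), deriv_sub hc1.differentiable_deriv_two.differentiableAt
        hc2.differentiable_deriv_two.differentiableAt]
    ring
  have hgdd : |(h1 - h2) x * deriv (deriv h2) x|
      ≤ |(h1 - h2) x| * |deriv (deriv h1) x| + α⁻¹ * |deriv (deriv (h1 - h2)) x| := by
    rw [hdd, mul_sub]
    refine (abs_sub _ _).trans ?_
    rw [abs_mul, abs_mul]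
    gcongr
  rw [deriv_Efun hc1 hc2 fun x => (hα.trans_le (hl2 x)).ne']
  refine (abs_sub_sub_add_le _ _ _ _).trans ?_
  gcongr
  · exact abs_div_le_div_of_le hα (hl2 x)
      (by rw [abs_mul]; exact mul_le_mul_of_nonneg_left hK2 (abs_nonneg _))
  · exact abs_div_le_div_of_le hα (hl2 x) hgdd
  · rw [abs_mul, abs_pow]
    gcongr
    exact abs_div_le_div_of_le hα (hl2 x) hK2

theorem abs_deriv_Efun_le (hα : 0 < α) (hα1 : α ≤ 1) (hc1 : ContDiff ℝ 2 h1)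
    (hc2 : ContDiff ℝ 2 h2) (hl2 : ∀ x, α ≤ h2 x) {x : ℝ} (hg : |(h1 - h2) x| ≤ α⁻¹)
    (hK2 : |deriv h2 x| ≤ K) :
    |deriv (Efun h1 h2) x| ≤ 2 * errorConst α K ^ 2 *
      (|(h1 - h2) x| + |deriv (h1 - h2) x|
        + (|(h1 - h2) x| * |deriv (deriv h1) x| + |deriv (deriv (h1 - h2)) x|)) := by
  have hK : 0 ≤ K := (abs_nonneg _).trans hK2
  have hc := one_le_errorConst hα hα1 hK
  have hcc : errorConst α K ≤ errorConst α K ^ 2 := by nlinarith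
  refine (abs_deriv_Efun_le' hα hc1 hc2 hl2 hg hK2).trans ?_
  set c := errorConst α K
  set g0 := |(h1 - h2) x|
  set g1 := |deriv (h1 - h2) x|
  set g2 := |deriv (deriv (h1 - h2)) x|
  set H := |deriv (deriv h1) x|
  have e1 : g2 ≤ c ^ 2 * g2 := le_mul_of_one_le_left (abs_nonneg _) (one_le_pow₀ hc)
  have e2 : α⁻¹ * α⁻¹ * g2 ≤ c ^ 2 * g2 := by
    rw [sq]; gcongr <;> exact inv_le_errorConst hα hK
  have e3 : K / α * g1 ≤ c ^ 2 * g1 := by gcongr; exact (div_le_errorConst hα).trans hcc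
  have e4 : α⁻¹ * (g0 * H) ≤ c ^ 2 * (g0 * H) := by
    gcongr; exact (inv_le_errorConst hα hK).trans hcc
  have e5 : (K / α) ^ 2 * g0 ≤ c ^ 2 * g0 := by gcongr; exact div_le_errorConst hα
  have n0 : 0 ≤ c ^ 2 * g0 := by positivity
  have n1 : 0 ≤ c ^ 2 * g1 := by positivity
  have nH : 0 ≤ c ^ 2 * (g0 * H) := by positivity
  calc _ = g2 + α⁻¹ * α⁻¹ * g2 + K / α * g1 + α⁻¹ * (g0 * H) + (K / α) ^ 2 * g0 := by ring
    _ ≤ _ := by linarith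

end SecondOrderBound

section Entries

variable {h1 h2 : ℝ → ℝ} {v1 : ℝ × ℝ → ℝ} {y : ℝ × ℝ} {α K : ℝ}

theorem abs_E2mat_apply_le (hα : 0 < α) (hα1 : α ≤ 1) (hl2 : α ≤ h2 y.1) (hy : |y.2| ≤ 1)
    (hE : DifferentiableAt ℝ (Efun h1 h2) y.1) (hv : DifferentiableAt ℝ v1 y) (i j : Fin 2) :
    |E2mat h1 h2 v1 y i j|
      ≤ α⁻¹ * (|Efun h1 h2 y.1| + |(h1 - h2) y.1|) * (|v1 y| + |pd1 v1 y| + |pd2 v1 y|)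
        + |deriv (Efun h1 h2) y.1| * |v1 y| := by
  have he := abs_nonneg (Efun h1 h2 y.1)
  have hg := abs_nonneg ((h1 - h2) y.1)
  have ha := abs_nonneg (v1 y)
  have hp := abs_nonneg (pd1 v1 y)
  have hq := abs_nonneg (pd2 v1 y)
  have he' : 0 ≤ |deriv (Efun h1 h2) y.1| * |v1 y| := by positivity
  have hdiv : ∀ M, M ≤ (|Efun h1 h2 y.1| + |(h1 - h2) y.1|) * (|v1 y| + |pd1 v1 y| + |pd2 v1 y|)
      → M / α ≤ α⁻¹ * (|Efun h1 h2 y.1| + |(h1 - h2) y.1|) * (|v1 y| + |pd1 v1 y| + |pd2 v1 y|)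
        + |deriv (Efun h1 h2) y.1| * |v1 y| := fun M hM => by
    rw [div_eq_inv_mul, mul_assoc]
    exact le_add_of_le_of_nonneg (mul_le_mul_of_nonneg_left hM (inv_nonneg.2 hα.le)) he'
  have hE_le : |Efun h1 h2 y.1| * (|v1 y| + |pd1 v1 y| + |pd2 v1 y|)
      ≤ α⁻¹ * (|Efun h1 h2 y.1| + |(h1 - h2) y.1|) * (|v1 y| + |pd1 v1 y| + |pd2 v1 y|) := by
    gcongr
    calc _ = 1 * |Efun h1 h2 y.1| := (one_mul _).symm
      _ ≤ _ := mul_le_mul ((one_le_inv₀ hα).2 hα1) (le_add_of_nonneg_right hg) he (by positivity)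
  fin_cases i <;> fin_cases j <;> simp only [E2mat, Fin.zero_eta, Fin.mk_one, Fin.isValue,
    Matrix.of_apply, Matrix.cons_val', Matrix.cons_val_zero, Matrix.cons_val_one,
    Matrix.empty_val', Matrix.cons_val_fin_one]
  · calc _ = |(v1 y * Efun h1 h2 y.1 + (h1 - h2) y.1 * pd1 v1 y) / h2 y.1| := by
          rw [add_div, mul_div_right_comm _ (pd1 v1 y)]; rfl
      _ ≤ (|v1 y| * |Efun h1 h2 y.1| + |(h1 - h2) y.1| * |pd1 v1 y|) / α :=
          abs_div_le_div_of_le hα hl2 ((abs_add_le _ _).trans_eq (by rw [abs_mul, abs_mul]))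
      _ ≤ _ := hdiv _ (by nlinarith)
  · calc _ = |(h1 - h2) y.1 * pd2 v1 y / h2 y.1| := by rw [div_mul_eq_mul_div]; rfl
      _ ≤ |(h1 - h2) y.1| * |pd2 v1 y| / α := abs_div_le_div_of_le hα hl2 (abs_mul _ _).le
      _ ≤ _ := hdiv _ (by nlinarith)
  · have hsum : |deriv (Efun h1 h2) y.1 * v1 y + Efun h1 h2 y.1 * pd1 v1 y|
        ≤ |deriv (Efun h1 h2) y.1| * |v1 y| + |Efun h1 h2 y.1| * |pd1 v1 y| :=
      (abs_add_le _ _).trans_eq (by rw [abs_mul, abs_mul])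
    rw [pd1_comp_fst_mul hE hv, abs_mul, abs_neg]
    nlinarith [mul_le_mul hy hsum (abs_nonneg _) zero_le_one]
  · have hsum : |v1 y + y.2 * pd2 v1 y| ≤ |v1 y| + |pd2 v1 y| := by
      nlinarith [abs_add_le (v1 y) (y.2 * pd2 v1 y), abs_mul y.2 (pd2 v1 y), abs_nonneg y.2]
    rw [pd2_snd_mul hv, abs_mul, abs_neg]
    nlinarith [mul_le_mul_of_nonneg_left hsum he]

theorem abs_E2mat_apply_le_of_le (hα : 0 < α) (hα1 : α ≤ 1) (hc1 : ContDiff ℝ 2 h1)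
    (hc2 : ContDiff ℝ 2 h2) (hl2 : ∀ x, α ≤ h2 x) (hg : |(h1 - h2) y.1| ≤ α⁻¹)
    (hK2 : |deriv h2 y.1| ≤ K) (hy : |y.2| ≤ 1) (hv : DifferentiableAt ℝ v1 y) {V W : ℝ}
    (hvV : |v1 y| ≤ V) (hp1 : |pd1 v1 y| ≤ W) (hp2 : |pd2 v1 y| ≤ W) (i j : Fin 2) :
    |E2mat h1 h2 v1 y i j|
      ≤ 4 * errorConst α K ^ 2 * ((|(h1 - h2) y.1| + |deriv (h1 - h2) y.1|) * (V + W)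
        + (|(h1 - h2) y.1| * |deriv (deriv h1) y.1| + |deriv (deriv (h1 - h2)) y.1|) * V) := by
  have hd1 := hc1.differentiable two_ne_zero
  have hd2 := hc2.differentiable two_ne_zero
  have hE := abs_Efun_le hα hα1 (hd1 y.1) (hd2 y.1) (hl2 y.1) hK2
  have hE' := abs_deriv_Efun_le hα hα1 hc1 hc2 hl2 hg hK2
  have hentry := abs_E2mat_apply_le hα hα1 (hl2 y.1) hy
    (differentiable_Efun hc1 hc2 (fun x => (hα.trans_le (hl2 x)).ne') y.1) hv i j
  have hK : 0 ≤ K := (abs_nonneg _).trans hK2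
  have hV : 0 ≤ V := (abs_nonneg _).trans hvV
  have hW : 0 ≤ W := (abs_nonneg _).trans hp1
  have hc := one_le_errorConst hα hα1 hK
  have hαc := inv_le_errorConst hα hK
  set c := errorConst α K
  set A := |(h1 - h2) y.1| + |deriv (h1 - h2) y.1|
  set B := |(h1 - h2) y.1| * |deriv (deriv h1) y.1| + |deriv (deriv (h1 - h2)) y.1|
  have hA : 0 ≤ A := by positivity
  have hBV : 0 ≤ c ^ 2 * B * V := by positivity
  have hcA : c * (c * A + A) ≤ 2 * c ^ 2 * A := by
    nlinarith [mul_nonneg (sub_nonneg.2 hc) (mul_nonneg (zero_le_one.trans hc) hA)]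
  calc |E2mat h1 h2 v1 y i j|
      ≤ α⁻¹ * (|Efun h1 h2 y.1| + |(h1 - h2) y.1|) * (|v1 y| + |pd1 v1 y| + |pd2 v1 y|)
        + |deriv (Efun h1 h2) y.1| * |v1 y| := hentry
    _ ≤ c * (c * A + A) * (V + W + W) + 2 * c ^ 2 * (A + B) * V := by
      gcongr
      exact le_add_of_nonneg_right (abs_nonneg _)
    _ ≤ 2 * c ^ 2 * A * (V + W + W) + 2 * c ^ 2 * (A + B) * V := by gcongr
    _ ≤ _ := by linarith

end Entries

/-- entrywise bound for `E₂(v)` by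
`C·[(|h̄|+|∂h̄|)(|v|+|∇v|) + (|h̄||∂²h¹|+|∂²h̄|)|v|]`, with `C = C(α,K)` only. -/
theorem E2mat_entry_bound
    (α K : ℝ) (hα : α ∈ Set.Ioo (0:ℝ) 1) (hK : 0 < K) :
    ∃ C > 0, ∀ h1 h2 : ℝ → ℝ,
      (∀ x, 0 < h1 x) → (∀ x, 0 < h2 x) →
      ContDiff ℝ 2 h1 → ContDiff ℝ 2 h2 →
      (∀ x, α ≤ h1 x) → (∀ x, h1 x ≤ α⁻¹) →
      (∀ x, α ≤ h2 x) → (∀ x, h2 x ≤ α⁻¹) →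
      (∀ x, |deriv h1 x| ≤ K) → (∀ x, |deriv h2 x| ≤ K) →
      ∀ v1 v2 : ℝ × ℝ → ℝ, ContDiff ℝ 1 v1 → ContDiff ℝ 1 v2 →
      ∀ y : ℝ × ℝ, y.2 ∈ Set.Icc (0:ℝ) 1 →
      ∀ i j : Fin 2,
        |E2mat h1 h2 v1 y i j|
          ≤ C * ((|h1 y.1 - h2 y.1| + |deriv (fun x => h1 x - h2 x) y.1|)
                  * (Real.sqrt (v1 y ^ 2 + v2 y ^ 2)
                     + Real.sqrt (pd1 v1 y ^ 2 + pd2 v1 y ^ 2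
                                   + pd1 v2 y ^ 2 + pd2 v2 y ^ 2))
                + (|h1 y.1 - h2 y.1| * |deriv (deriv h1) y.1|
                   + |deriv (deriv (fun x => h1 x - h2 x)) y.1|)
                  * Real.sqrt (v1 y ^ 2 + v2 y ^ 2)) := by
  obtain ⟨hα0, hα1⟩ := hα
  refine ⟨4 * errorConst α K ^ 2, by unfold errorConst; positivity,
    fun h1 h2 _ _ hc1 hc2 hl1 hu1 hl2 hu2 _ hK2 v1 v2 hv1 _ y hy i j => ?_⟩
  have hg : |(h1 - h2) y.1| ≤ α⁻¹ := by
    rw [Pi.sub_apply, abs_sub_le_iff]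
    constructor <;> linarith [hl1 y.1, hu1 y.1, hl2 y.1, hu2 y.1]
  exact abs_E2mat_apply_le_of_le hα0 hα1.le hc1 hc2 hl2 hg (hK2 y.1)
    (abs_le.2 ⟨by linarith [hy.1], hy.2⟩) (hv1.differentiable one_ne_zero y)
    (Real.abs_le_sqrt (by nlinarith)) (Real.abs_le_sqrt (by nlinarith))
    (Real.abs_le_sqrt (by nlinarith)) i j
end

section
/- Let α ∈ (0,1) and K > 0, and let h¹, h² be positive twice continuously differentiable real functions of y₁ satisfying α ≤ hⁱ(y₁) ≤ α⁻¹ and |∂_{y₁}hⁱ(y₁)| ≤ K for i = 1,2. Then there exists a constant C depending only on α and K such that for every point y = (y₁,y₂) with y₂ ∈ [0,1], every first-order partial derivative (with respect to y₁ or y₂) of each entry of the matrix R(y) is bounded in absolute value by C·( |h̄|·(1 + |∂²_{y₁}h¹|) + |∂_{y₁}h̄| + |∂²_{y₁}h̄| ) evaluated at y₁, where h̄ := h¹ − h². -/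
open Matrix

/-- The matrix `R(y) = [[h¹/h², 0],[−y₂h²∂_{y₁}(h¹/h²), 1]]` as a matrix-valued
function of `y`. -/
noncomputable def Rmat (h1 h2 : ℝ → ℝ) (y : ℝ × ℝ) : Matrix (Fin 2) (Fin 2) ℝ :=
  !![h1 y.1 / h2 y.1, 0;
     -y.2 * h2 y.1 * deriv (fun x => h1 x / h2 x) y.1, 1]

/-! The only nonconstant entries of `R` are `h¹/h²` and `-y₂ h² (h¹/h²)'`. Their partial
derivatives are `W/(h²)²`, `-h² W/(h²)²` and `-y₂ (W' h² - W h²')/(h²)²`, where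
`W = h¹' h² - h¹ h²'` and `W' = h¹'' h² - h¹ h²''`. Both numerators vanish when `h¹ = h²`;
quantitatively, `c b - a d = c (b - a) + a (c - d)` bounds them by `|h¹'| |h̄| + |h¹| |h̄'|` and
`|h¹''| |h̄| + |h¹| |h̄''|`, while `h² ≥ α` controls the denominators. -/

lemma abs_mul_sub_mul_le (a b c d : ℝ) : |c * b - a * d| ≤ |c| * |a - b| + |a| * |c - d| :=
  calc |c * b - a * d| = |c * (b - a) + a * (c - d)| := by ring_nf
    _ ≤ |c * (b - a)| + |a * (c - d)| := abs_add_le _ _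
    _ = |c| * |a - b| + |a| * |c - d| := by rw [abs_mul, abs_mul, abs_sub_comm b a]

lemma abs_inv_le_of_inv_le {M b : ℝ} (hM : 0 < M) (hb : M⁻¹ ≤ b) : |b⁻¹| ≤ M := by
  rw [abs_of_pos (inv_pos.2 ((inv_pos.2 hM).trans_le hb))]
  exact inv_le_of_inv_le₀ hM hb

noncomputable def discrepancy (f g : ℝ → ℝ) (x : ℝ) : ℝ :=
  |f x - g x| * (1 + |deriv (deriv f) x|) + |deriv (fun t => f t - g t) x|
    + |deriv (deriv (fun t => f t - g t)) x|

section Quotient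

variable {f g : ℝ → ℝ} {x M : ℝ}

lemma discrepancy_nonneg : 0 ≤ discrepancy f g x := by
  unfold discrepancy; positivity

lemma discrepancy_eq (hf : ContDiff ℝ 2 f) (hg : ContDiff ℝ 2 g) :
    discrepancy f g x = |f x - g x| * (1 + |deriv (deriv f) x|) + |deriv f x - deriv g x|
      + |deriv (deriv f) x - deriv (deriv g) x| := by
  have hsub : deriv (fun t => f t - g t) = fun t => deriv f t - deriv g t :=
    funext fun t => deriv_fun_sub (hf.differentiable two_ne_zero t) (hg.differentiable two_ne_zero t)
  rw [discrepancy, hsub, deriv_fun_sub (hf.differentiable_deriv_two x) (hg.differentiable_deriv_two x)]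

lemma abs_wronskian_le (hf : ContDiff ℝ 2 f) (hg : ContDiff ℝ 2 g) (hf_le : |f x| ≤ M)
    (hf'_le : |deriv f x| ≤ M) :
    |deriv f x * g x - f x * deriv g x| ≤ M * discrepancy f g x := by
  have hM : 0 ≤ M := (abs_nonneg _).trans hf_le
  rw [discrepancy_eq hf hg]
  calc _ ≤ |deriv f x| * |f x - g x| + |f x| * |deriv f x - deriv g x| := abs_mul_sub_mul_le ..
    _ ≤ M * |f x - g x| + M * |deriv f x - deriv g x| := by gcongr
    _ ≤ _ := by
        have := mul_nonneg hM (mul_nonneg (abs_nonneg (f x - g x)) (abs_nonneg (deriv (deriv f) x)))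
        have := mul_nonneg hM (abs_nonneg (deriv (deriv f) x - deriv (deriv g) x))
        linarith

lemma abs_wronskian_deriv_le (hf : ContDiff ℝ 2 f) (hg : ContDiff ℝ 2 g) (hM : 1 ≤ M)
    (hf_le : |f x| ≤ M) :
    |deriv (deriv f) x * g x - f x * deriv (deriv g) x| ≤ M * discrepancy f g x := by
  rw [discrepancy_eq hf hg]
  calc _ ≤ |deriv (deriv f) x| * |f x - g x| + |f x| * |deriv (deriv f) x - deriv (deriv g) x| :=
        abs_mul_sub_mul_le ..
    _ ≤ M * (|deriv (deriv f) x| * |f x - g x|) + M * |deriv (deriv f) x - deriv (deriv g) x| :=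
        add_le_add (le_mul_of_one_le_left (by positivity) hM)
          (mul_le_mul_of_nonneg_right hf_le (abs_nonneg _))
    _ ≤ _ := by nlinarith [abs_nonneg (f x - g x), abs_nonneg (deriv (deriv f) x),
                  abs_nonneg (deriv f x - deriv g x)]

lemma deriv_mul_deriv_div (hf : ContDiff ℝ 2 f) (hg : ContDiff ℝ 2 g) (hx : g x ≠ 0) :
    deriv (fun t => g t * deriv (fun s => f s / g s) t) x
      = ((deriv (deriv f) x * g x - f x * deriv (deriv g) x) * g x
          - (deriv f x * g x - f x * deriv g x) * deriv g x) / g x ^ 2 := by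
  have hf1 : Differentiable ℝ f := hf.differentiable two_ne_zero
  have hg1 : Differentiable ℝ g := hg.differentiable two_ne_zero
  have hf2 : Differentiable ℝ (deriv f) := hf.differentiable_deriv_two
  have hg2 : Differentiable ℝ (deriv g) := hg.differentiable_deriv_two
  have hev : (fun t => g t * deriv (fun s => f s / g s) t)
      =ᶠ[nhds x] fun t => (deriv f t * g t - f t * deriv g t) / g t := by
    filter_upwards [hg.continuous.continuousAt.eventually_ne hx] with t ht
    rw [deriv_fun_div (hf1 t) (hg1 t) ht]
    field_simp
  have hW : HasDerivAt (fun t => deriv f t * g t - f t * deriv g t)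
      (deriv (deriv f) x * g x - f x * deriv (deriv g) x) x :=
    (((hf2 x).hasDerivAt.fun_mul (hg1 x).hasDerivAt).fun_sub
      ((hf1 x).hasDerivAt.fun_mul (hg2 x).hasDerivAt)).congr_deriv (by ring)
  rw [hev.deriv_eq]
  exact (hW.div (hg1 x).hasDerivAt hx).deriv

lemma abs_deriv_div_le (hf : ContDiff ℝ 2 f) (hg : ContDiff ℝ 2 g) (hM : 0 < M)
    (hg_ge : M⁻¹ ≤ g x) (hf_le : |f x| ≤ M) (hf'_le : |deriv f x| ≤ M) :
    |deriv (fun t => f t / g t) x| ≤ M ^ 3 * discrepancy f g x := by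
  have hx : g x ≠ 0 := ((inv_pos.2 hM).trans_le hg_ge).ne'
  rw [deriv_fun_div (hf.differentiable two_ne_zero x) (hg.differentiable two_ne_zero x) hx,
    div_eq_mul_inv, abs_mul, ← inv_pow, abs_pow]
  have hW := abs_wronskian_le hf hg hf_le hf'_le
  have hMD : 0 ≤ M * discrepancy f g x := (abs_nonneg _).trans hW
  have hg_inv := abs_inv_le_of_inv_le hM hg_ge
  calc _ ≤ M * discrepancy f g x * M ^ 2 := by gcongr
    _ = M ^ 3 * discrepancy f g x := by ring

lemma abs_deriv_mul_deriv_div_le (hf : ContDiff ℝ 2 f) (hg : ContDiff ℝ 2 g) (hM : 1 ≤ M)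
    (hg_ge : M⁻¹ ≤ g x) (hf_le : |f x| ≤ M) (hf'_le : |deriv f x| ≤ M) (hg_le : |g x| ≤ M)
    (hg'_le : |deriv g x| ≤ M) :
    |deriv (fun t => g t * deriv (fun s => f s / g s) t) x| ≤ 2 * M ^ 4 * discrepancy f g x := by
  have hM0 : 0 < M := one_pos.trans_le hM
  have hx : g x ≠ 0 := ((inv_pos.2 hM0).trans_le hg_ge).ne'
  have hW := abs_wronskian_le hf hg hf_le hf'_le
  have hW' := abs_wronskian_deriv_le hf hg hM hf_le
  have hMD : 0 ≤ M * discrepancy f g x := (abs_nonneg _).trans hW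
  have hg_inv := abs_inv_le_of_inv_le hM0 hg_ge
  have hN : |(deriv (deriv f) x * g x - f x * deriv (deriv g) x) * g x
      - (deriv f x * g x - f x * deriv g x) * deriv g x|
        ≤ M * discrepancy f g x * M + M * discrepancy f g x * M := by
    refine (abs_sub _ _).trans (add_le_add ?_ ?_) <;> rw [abs_mul] <;> gcongr
  rw [deriv_mul_deriv_div hf hg hx, div_eq_mul_inv, abs_mul, ← inv_pow, abs_pow]
  calc _ ≤ (M * discrepancy f g x * M + M * discrepancy f g x * M) * M ^ 2 := by gcongr
    _ = 2 * M ^ 4 * discrepancy f g x := by ring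

end Quotient

section Entries

variable {h1 h2 : ℝ → ℝ} {y : ℝ × ℝ}

lemma pd1_Rmat_zero_zero :
    pd1 (fun z => Rmat h1 h2 z 0 0) y = deriv (fun t => h1 t / h2 t) y.1 := by
  simp [pd1, Rmat]

lemma pd1_Rmat_one_zero :
    pd1 (fun z => Rmat h1 h2 z 1 0) y
      = -y.2 * deriv (fun t => h2 t * deriv (fun s => h1 s / h2 s) t) y.1 := by
  simp only [pd1, Rmat, of_apply, cons_val', cons_val_zero, cons_val_one, empty_val',
    cons_val_fin_one, mul_assoc]
  exact deriv_const_mul_field _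

lemma pd2_Rmat_one_zero :
    pd2 (fun z => Rmat h1 h2 z 1 0) y = -(h2 y.1 * deriv (fun t => h1 t / h2 t) y.1) := by
  simp [pd2, Rmat]

end Entries

lemma abs_pd_Rmat_le {h1 h2 : ℝ → ℝ} {M : ℝ} {y : ℝ × ℝ} (h1c : ContDiff ℝ 2 h1)
    (h2c : ContDiff ℝ 2 h2) (hM : 1 ≤ M) (hy : |y.2| ≤ 1) (h1_le : |h1 y.1| ≤ M)
    (h1'_le : |deriv h1 y.1| ≤ M) (h2_ge : M⁻¹ ≤ h2 y.1) (h2_le : |h2 y.1| ≤ M)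
    (h2'_le : |deriv h2 y.1| ≤ M) (i j : Fin 2) :
    |pd1 (fun z => Rmat h1 h2 z i j) y| ≤ 2 * M ^ 4 * discrepancy h1 h2 y.1 ∧
      |pd2 (fun z => Rmat h1 h2 z i j) y| ≤ 2 * M ^ 4 * discrepancy h1 h2 y.1 := by
  set x := y.1
  set D := discrepancy h1 h2 x
  have hD : 0 ≤ D := discrepancy_nonneg
  have hM0 : 0 < M := one_pos.trans_le hM
  have h_div := abs_deriv_div_le h1c h2c hM0 h2_ge h1_le h1'_le
  have hM4D : M ^ 4 * D ≤ 2 * M ^ 4 * D := by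
    have := mul_nonneg (pow_nonneg hM0.le 4) hD
    linarith
  match i, j with
  | 0, 0 =>
    refine ⟨?_, by simp [pd2, Rmat]; positivity⟩
    rw [pd1_Rmat_zero_zero]
    exact h_div.trans (le_trans (mul_le_mul_of_nonneg_right
      (pow_le_pow_right₀ hM (by norm_num)) hD) hM4D)
  | 0, 1 => exact ⟨by simp [pd1, Rmat]; positivity, by simp [pd2, Rmat]; positivity⟩
  | 1, 0 =>
    constructor
    · rw [pd1_Rmat_one_zero, abs_mul, abs_neg]
      exact (mul_le_of_le_one_left (abs_nonneg _) hy).trans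
        (abs_deriv_mul_deriv_div_le h1c h2c hM h2_ge h1_le h1'_le h2_le h2'_le)
    · calc _ = |h2 x| * |deriv (fun t => h1 t / h2 t) x| := by
            rw [pd2_Rmat_one_zero, abs_neg, abs_mul]
        _ ≤ M * (M ^ 3 * D) := by gcongr
        _ = M ^ 4 * D := by ring
        _ ≤ 2 * M ^ 4 * D := hM4D
  | 1, 1 => exact ⟨by simp [pd1, Rmat]; positivity, by simp [pd2, Rmat]; positivity⟩

theorem Rmat_entry_deriv_bound_general
    (α K : ℝ) (hα : α ∈ Set.Ioo (0:ℝ) 1) :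
    ∃ C > 0, ∀ h1 h2 : ℝ → ℝ,
      (∀ x, 0 < h1 x) → (∀ x, 0 < h2 x) →
      ContDiff ℝ 2 h1 → ContDiff ℝ 2 h2 →
      (∀ x, α ≤ h1 x) → (∀ x, h1 x ≤ α⁻¹) →
      (∀ x, α ≤ h2 x) → (∀ x, h2 x ≤ α⁻¹) →
      (∀ x, |deriv h1 x| ≤ K) → (∀ x, |deriv h2 x| ≤ K) →
      ∀ y : ℝ × ℝ, y.2 ∈ Set.Icc (0:ℝ) 1 →
      ∀ i j : Fin 2,
        |pd1 (fun z => Rmat h1 h2 z i j) y|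
            ≤ C * (|h1 y.1 - h2 y.1| * (1 + |deriv (deriv h1) y.1|)
                   + |deriv (fun x => h1 x - h2 x) y.1|
                   + |deriv (deriv (fun x => h1 x - h2 x)) y.1|) ∧
        |pd2 (fun z => Rmat h1 h2 z i j) y|
            ≤ C * (|h1 y.1 - h2 y.1| * (1 + |deriv (deriv h1) y.1|)
                   + |deriv (fun x => h1 x - h2 x) y.1|
                   + |deriv (deriv (fun x => h1 x - h2 x)) y.1|) := by
  set M := max α⁻¹ K
  have hM : 1 ≤ M := ((one_le_inv₀ hα.1).2 hα.2.le).trans (le_max_left _ _)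
  refine ⟨2 * M ^ 4, by have := one_pos.trans_le hM; positivity, ?_⟩
  intro h1 h2 _ _ h1c h2c h1_ge h1_le h2_ge h2_le h1'_le h2'_le y hy
  have abs_le_M (h : ℝ → ℝ) (h_ge : ∀ x, α ≤ h x) (h_le : ∀ x, h x ≤ α⁻¹) : |h y.1| ≤ M :=
    abs_le.2 ⟨by linarith [h_ge y.1, hα.1], (h_le _).trans (le_max_left _ _)⟩
  exact abs_pd_Rmat_le h1c h2c hM (abs_le.2 ⟨by linarith [hy.1], hy.2⟩)
    (abs_le_M h1 h1_ge h1_le) ((h1'_le _).trans (le_max_right _ _))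
    ((inv_le_of_inv_le₀ hα.1 (le_max_left _ _)).trans (h2_ge _))
    (abs_le_M h2 h2_ge h2_le) ((h2'_le _).trans (le_max_right _ _))

/-- every first-order partial derivative of every entry of `R`
is bounded by `C·(|h̄|(1+|∂²h¹|) + |∂h̄| + |∂²h̄|)`, with `C = C(α,K)` only. -/
theorem Rmat_entry_deriv_bound
    (α K : ℝ) (hα : α ∈ Set.Ioo (0:ℝ) 1) (hK : 0 < K) :
    ∃ C > 0, ∀ h1 h2 : ℝ → ℝ,
      (∀ x, 0 < h1 x) → (∀ x, 0 < h2 x) →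
      ContDiff ℝ 2 h1 → ContDiff ℝ 2 h2 →
      (∀ x, α ≤ h1 x) → (∀ x, h1 x ≤ α⁻¹) →
      (∀ x, α ≤ h2 x) → (∀ x, h2 x ≤ α⁻¹) →
      (∀ x, |deriv h1 x| ≤ K) → (∀ x, |deriv h2 x| ≤ K) →
      ∀ y : ℝ × ℝ, y.2 ∈ Set.Icc (0:ℝ) 1 →
      ∀ i j : Fin 2,
        |pd1 (fun z => Rmat h1 h2 z i j) y|
            ≤ C * (|h1 y.1 - h2 y.1| * (1 + |deriv (deriv h1) y.1|)
                   + |deriv (fun x => h1 x - h2 x) y.1|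
                   + |deriv (deriv (fun x => h1 x - h2 x)) y.1|) ∧
        |pd2 (fun z => Rmat h1 h2 z i j) y|
            ≤ C * (|h1 y.1 - h2 y.1| * (1 + |deriv (deriv h1) y.1|)
                   + |deriv (fun x => h1 x - h2 x) y.1|
                   + |deriv (deriv (fun x => h1 x - h2 x)) y.1|) :=
  Rmat_entry_deriv_bound_general α K hα
end
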